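/- (Fefferman–Stein type dual inequality, quantitative.) Let $t\in(1,\infty)$, $p\in(1,\infty)$, and $w$ a weight on $\mathbb{R}^d$. Then $\|Mf\|_{L^{p'}((M_t w)^{1-p'})} \le c_d\, p\, (t')^{1/p'} \|f\|_{L^{p'}(w^{1-p'})}$, where $M_t w = (M(w^t))^{1/t}$, $p'=p/(p-1)$, $t'=t/(t-1)$, and $M$ is the Hardy–Littlewood maximal operator. -/

import Mathlib

open MeasureTheory ENNReal Filter Set

noncomputable section

namespace Rough

abbrev Ed (d : ℕ) := EuclideanSpace ℝ (Fin d)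

structure Cube (d : ℕ) where
  center : Ed d
  halfside : ℝ
  halfside_pos : 0 < halfside

variable {d : ℕ}

def Cube.carrier (Q : Cube d) : Set (Ed d) :=
  {x | ∀ i, |x i - Q.center i| ≤ Q.halfside}

def Cube.dilate (Q : Cube d) (t : ℝ) (ht : 0 < t) : Cube d :=
  ⟨Q.center, t * Q.halfside, mul_pos ht Q.halfside_pos⟩

/-- Average of an `ℝ≥0∞`-valued function over a cube. -/
def lavg (Q : Cube d) (f : Ed d → ℝ≥0∞) : ℝ≥0∞ :=
  (volume Q.carrier)⁻¹ * ∫⁻ x in Q.carrier, f x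

/-- Hardy–Littlewood maximal operator over cubes, `ℝ≥0∞`-valued. -/
def maximal (f : Ed d → ℝ≥0∞) (x : Ed d) : ℝ≥0∞ :=
  ⨆ (Q : Cube d) (_ : x ∈ Q.carrier), lavg Q f

def Mabs (f : Ed d → ℝ) (x : Ed d) : ℝ≥0∞ :=
  maximal (fun y => ENNReal.ofReal |f y|) x

/-- `A₁` constant. -/
def A1Const (w : Ed d → ℝ) : ℝ≥0∞ :=
  ⨆ x : Ed d, Mabs w x / ENNReal.ofReal (w x)

/-- Fujii–Wilson `A∞` constant. -/
def AinfConst (w : Ed d → ℝ) : ℝ≥0∞ :=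
  ⨆ Q : Cube d,
    (∫⁻ x in Q.carrier, ENNReal.ofReal (w x))⁻¹ *
      ∫⁻ x in Q.carrier,
        maximal (Q.carrier.indicator fun y => ENNReal.ofReal (w y)) x

/-- Muckenhoupt `A_p` constant. -/
def ApConst (p : ℝ) (w : Ed d → ℝ) : ℝ≥0∞ :=
  ⨆ Q : Cube d,
    lavg Q (fun x => ENNReal.ofReal (w x)) *
      (lavg Q fun x => ENNReal.ofReal (w x ^ (-1 / (p - 1)))) ^ (p - 1)

/-- Localized Luxemburg norm `‖f‖_{L(log L)^β, Q}`. -/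
def luxNorm (β : ℝ) (Q : Cube d) (f : Ed d → ℝ) : ℝ :=
  sInf {t : ℝ | 0 < t ∧
    (∫⁻ x in Q.carrier,
      ENNReal.ofReal (|f x| / t * Real.log (Real.exp 1 + |f x| / t) ^ β))
      ≤ volume Q.carrier}

/-- Orlicz maximal operator `M_{L(log L)^β}`. -/
def MOrlicz (β : ℝ) (f : Ed d → ℝ) (x : Ed d) : ℝ≥0∞ :=
  ⨆ (Q : Cube d) (_ : x ∈ Q.carrier), ENNReal.ofReal (luxNorm β Q f)

def IsSparse (η : ℝ) (S : Set (Cube d)) : Prop :=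
  ∃ E : Cube d → Set (Ed d),
    (∀ Q ∈ S, MeasurableSet (E Q) ∧ E Q ⊆ Q.carrier ∧
      ENNReal.ofReal η * volume Q.carrier ≤ volume (E Q)) ∧
    S.Pairwise fun Q Q' => Disjoint (E Q) (E Q')

/-- Bilinear sparse form `𝓐_{S; L(log L)^β, L^r}(f, g)`. -/
def sparseForm (β r : ℝ) (S : Set (Cube d)) (f g : Ed d → ℝ) : ℝ≥0∞ :=
  ∑' Q : S, volume Q.1.carrier * ENNReal.ofReal (luxNorm β Q.1 f) *
    (lavg Q.1 fun x => ENNReal.ofReal (|g x| ^ r)) ^ (1 / r)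

def Sublinear (U : (Ed d → ℝ) → Ed d → ℝ) : Prop :=
  (∀ f g x, |U (f + g) x| ≤ |U f x| + |U g x|) ∧
    ∀ (c : ℝ) (f) (x), |U (c • f) x| = |c| * |U f x|

def LinearOp (U : (Ed d → ℝ) → Ed d → ℝ) : Prop :=
  (∀ f g, U (f + g) = U f + U g) ∧ ∀ (c : ℝ) (f), U (c • f) = c • U f

/-- `(L(log L)^β, L^r)`-bilinear sparse domination with bound `A`
(with `η`-sparse families). -/
def HasSparseDom (U : (Ed d → ℝ) → Ed d → ℝ) (β r η A : ℝ) : Prop :=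
  ∀ f : Ed d → ℝ, Measurable f → (∃ C, ∀ x, |f x| ≤ C) → HasCompactSupport f →
    ∃ S : Set (Cube d), IsSparse η S ∧
      ∀ g : Ed d → ℝ, Measurable g →
        ENNReal.ofReal |∫ x, g x * U f x| ≤ ENNReal.ofReal A * sparseForm β r S f g

def wMeasure (w : Ed d → ℝ) : Measure (Ed d) :=
  volume.withDensity fun x => ENNReal.ofReal (w x)

/-- Rough homogeneous singular integral, as a principal value. -/
def TOmega (Ω : Ed d → ℝ) (f : Ed d → ℝ) (x : Ed d) : ℝ :=
  limUnder (nhdsWithin (0:ℝ) (Set.Ioi 0)) fun ε =>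
    ∫ y in {y : Ed d | ε < dist x y}, Ω (x - y) / dist x y ^ d * f y

def HomZero (Ω : Ed d → ℝ) : Prop := ∀ t : ℝ, 0 < t → ∀ x, Ω (t • x) = Ω x

def MeanZero (Ω : Ed d → ℝ) : Prop :=
  ∫ x : Metric.sphere (0 : Ed d) 1, Ω x ∂(volume : Measure (Ed d)).toSphere = 0

/-- Grand maximal operator `𝓜_{T,r}`. -/
def grandM (T : (Ed d → ℝ) → Ed d → ℝ) (r : ℝ) (h : Ed d → ℝ) (x : Ed d) : ℝ≥0∞ :=
  ⨆ (Q : Cube d) (_ : x ∈ Q.carrier),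
    (lavg Q fun ξ =>
      ENNReal.ofReal |T (((Q.dilate 3 (by norm_num)).carrier)ᶜ.indicator h) ξ| ^ r) ^ (1 / r)

end Rough

/-!
Write `P = p'` and `q = P - (P - 1) / t`, so that `1 < q < P`. Pointwise
`|f| = h ^ (q / P) * (w ^ t) ^ (1 - q / P)` with `h = (|f| ^ P * w ^ (1 - P)) ^ (1 / q)`, so
Hölder's inequality on every cube gives `M f ≤ (M h) ^ (q / P) * (M (w ^ t)) ^ (1 - q / P)`, that is
`(M f) ^ P * (M_t w) ^ (1 - P) ≤ (M h) ^ q`: the weight disappears. Integrating and applying the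
strong-type bound `‖M h‖_q ^ q ≤ 5 ^ d * 2 ^ q * q' * ‖h‖_q ^ q` (from the Vitali covering lemma for
the weak type (1,1) of `M`, then the layer-cake formula) gives the claim, since
`‖h‖_q ^ q = ∫ |f| ^ P * w ^ (1 - P)` and `q' = (t p - 1) / (t - 1) ≤ p t'`.
-/

open Topology

section LayerCake

theorem lintegral_Ioo_zero_rpow {e R : ℝ} (he : -1 < e) (hR : 0 ≤ R) :
    ∫⁻ t in Ioo 0 R, ENNReal.ofReal (t ^ e) =
      (ENNReal.ofReal (e + 1))⁻¹ * ENNReal.ofReal R ^ (e + 1) := by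
  have hint : IntegrableOn (fun t : ℝ => t ^ e) (Ioo 0 R) := by
    rw [← intervalIntegrable_iff_integrableOn_Ioo_of_le hR]
    exact intervalIntegral.intervalIntegrable_rpow' he
  rw [← ofReal_integral_eq_lintegral_ofReal hint
      ((ae_restrict_mem measurableSet_Ioo).mono fun t ht => Real.rpow_nonneg ht.1.le e),
    ← integral_Ioc_eq_integral_Ioo, ← intervalIntegral.integral_of_le hR,
    integral_rpow (Or.inl he), Real.zero_rpow (by linarith), sub_zero,
    ENNReal.ofReal_div_of_pos (by linarith), ENNReal.ofReal_rpow_of_nonneg hR (by linarith),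
    ENNReal.div_eq_inv_mul]

theorem lintegral_Ioi_indicator_rpow {e : ℝ} (he : -1 < e) (b : ℝ≥0∞) :
    ∫⁻ t in Ioi 0, {t : ℝ | ENNReal.ofReal t < b}.indicator (fun t => ENNReal.ofReal (t ^ e)) t =
      (ENNReal.ofReal (e + 1))⁻¹ * b ^ (e + 1) := by
  have hmeas : MeasurableSet {t : ℝ | ENNReal.ofReal t < b} :=
    measurableSet_lt ENNReal.measurable_ofReal measurable_const
  rw [lintegral_indicator hmeas, Measure.restrict_restrict hmeas]
  rcases eq_or_ne b ∞ with rfl | hb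
  · simp only [ofReal_lt_top, ofPred_true, univ_inter]
    rw [ENNReal.top_rpow_of_pos (by linarith), ENNReal.mul_top (by simp)]
    have hlim : Tendsto (fun R : ℝ => (ENNReal.ofReal (e + 1))⁻¹ * ENNReal.ofReal R ^ (e + 1))
        atTop (𝓝 ∞) := by
      rw [← ENNReal.mul_top (by simp : (ENNReal.ofReal (e + 1))⁻¹ ≠ 0)]
      exact ENNReal.Tendsto.const_mul ((ENNReal.tendsto_rpow_at_top (by linarith)).comp
        ENNReal.tendsto_ofReal_atTop) (Or.inl top_ne_zero)
    refine top_unique (le_of_tendsto hlim ((eventually_ge_atTop 0).mono fun R hR => ?_))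
    rw [← lintegral_Ioo_zero_rpow he hR]
    exact lintegral_mono_set Ioo_subset_Ioi_self
  · have hset : {t : ℝ | ENNReal.ofReal t < b} ∩ Ioi 0 = Ioo 0 b.toReal := by
      ext t
      simp only [mem_inter_iff, mem_ofPred_eq, mem_Ioi, mem_Ioo]
      constructor
      · rintro ⟨hlt, ht⟩
        exact ⟨ht, (ENNReal.ofReal_lt_iff_lt_toReal ht.le hb).1 hlt⟩
      · rintro ⟨ht, hlt⟩
        exact ⟨(ENNReal.ofReal_lt_iff_lt_toReal ht.le hb).2 hlt, ht⟩
    rw [hset, lintegral_Ioo_zero_rpow he ENNReal.toReal_nonneg, ENNReal.ofReal_toReal hb]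

variable {α β : Type*} [MeasurableSpace α] [MeasurableSpace β] {μ : Measure α} {ν : Measure β}
  [SFinite μ] [SFinite ν]

theorem lintegral_rpow_eq_lintegral_meas_ofReal_lt_mul {g : α → ℝ≥0∞} (hg : Measurable g)
    {q : ℝ} (hq : 0 < q) :
    ∫⁻ x, g x ^ q ∂μ =
      ENNReal.ofReal q *
        ∫⁻ t in Ioi 0, μ {x | ENNReal.ofReal t < g x} * ENNReal.ofReal (t ^ (q - 1)) := by
  have hpow : ∀ b : ℝ≥0∞, b ^ q = ENNReal.ofReal q *
      ∫⁻ t in Ioi 0,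
        {t : ℝ | ENNReal.ofReal t < b}.indicator (fun t => ENNReal.ofReal (t ^ (q - 1))) t := by
    intro b
    rw [lintegral_Ioi_indicator_rpow (by linarith), sub_add_cancel, ← mul_assoc,
      ENNReal.mul_inv_cancel (ENNReal.ofReal_pos.2 hq).ne' ofReal_ne_top, one_mul]
  simp_rw [hpow]
  rw [lintegral_const_mul' _ _ ofReal_ne_top, lintegral_lintegral_swap ?_]
  · congr 1
    refine lintegral_congr fun t => ?_
    rw [mul_comm, ← lintegral_indicator_const (measurableSet_lt measurable_const hg)]
    rfl
  exact ((Measurable.ennreal_ofReal (by fun_prop)).indicator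
    (measurableSet_lt (by fun_prop) (hg.comp measurable_fst))).aemeasurable

theorem lintegral_Ioi_indicator_two_mul_rpow_mul {q : ℝ} (hq : 1 < q) (b : ℝ≥0∞) :
    ∫⁻ t in Ioi 0,
      {t : ℝ | ENNReal.ofReal t < 2 * b}.indicator (fun t => ENNReal.ofReal (t ^ (q - 2))) t * b =
      (ENNReal.ofReal (q - 1))⁻¹ * 2 ^ (q - 1) * b ^ q := by
  have hb : b ^ q = b ^ (q - 1) * b := by
    simpa using ENNReal.rpow_add_of_nonneg (x := b) (q - 1) 1 (by linarith) zero_le_one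
  rw [lintegral_mul_const _ ((Measurable.ennreal_ofReal (by fun_prop)).indicator
      (measurableSet_lt ENNReal.measurable_ofReal measurable_const)),
    lintegral_Ioi_indicator_rpow (by linarith), show q - 2 + 1 = q - 1 by ring,
    ENNReal.mul_rpow_of_nonneg _ _ (by linarith : (0 : ℝ) ≤ q - 1), hb]
  ring

theorem lintegral_rpow_le_of_mul_meas_lt_le {g : α → ℝ≥0∞} {h : β → ℝ≥0∞} (hg : Measurable g)
    (hh : Measurable h) {C : ℝ≥0∞} {q : ℝ} (hq : 1 < q)
    (hgh : ∀ a, a * μ {x | a < g x} ≤ C * ∫⁻ y, {y | a < 2 * h y}.indicator h y ∂ν) :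
    ∫⁻ x, g x ^ q ∂μ ≤ ENNReal.ofReal (q / (q - 1)) * 2 ^ (q - 1) * C * ∫⁻ y, h y ^ q ∂ν := by
  calc ∫⁻ x, g x ^ q ∂μ
      = ENNReal.ofReal q * ∫⁻ t in Ioi 0,
          ENNReal.ofReal t * μ {x | ENNReal.ofReal t < g x} * ENNReal.ofReal (t ^ (q - 2)) := by
        rw [lintegral_rpow_eq_lintegral_meas_ofReal_lt_mul hg (by linarith)]
        congr 1
        refine setLIntegral_congr_fun measurableSet_Ioi fun t (ht : 0 < t) => ?_
        rw [mul_comm (ENNReal.ofReal t), mul_assoc, ← ENNReal.ofReal_mul ht.le,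
          ← Real.rpow_one_add' ht.le (by linarith), show 1 + (q - 2) = q - 1 by ring]
    _ ≤ ENNReal.ofReal q * ∫⁻ t in Ioi 0,
          C * (∫⁻ y, {y | ENNReal.ofReal t < 2 * h y}.indicator h y ∂ν) *
            ENNReal.ofReal (t ^ (q - 2)) :=
        mul_le_mul_right (lintegral_mono fun t => mul_le_mul_left (hgh _) _) _
    _ = ENNReal.ofReal q * C * ∫⁻ y, (∫⁻ t in Ioi 0,
          {t : ℝ | ENNReal.ofReal t < 2 * h y}.indicator
            (fun t => ENNReal.ofReal (t ^ (q - 2))) t * h y) ∂ν := by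
        have hG : Measurable fun p : ℝ × β =>
            {y | ENNReal.ofReal p.1 < 2 * h y}.indicator h p.2 * ENNReal.ofReal (p.1 ^ (q - 2)) :=
          (hh.comp measurable_snd).indicator (measurableSet_lt (by fun_prop)
            (measurable_const.mul (hh.comp measurable_snd))) |>.mul (by fun_prop)
        simp_rw [mul_assoc C, mul_assoc (ENNReal.ofReal q) C,
          ← lintegral_mul_const' _ _ ofReal_ne_top]
        rw [lintegral_const_mul _ hG.lintegral_prod_right',
          lintegral_lintegral_swap hG.aemeasurable]
        congr 2
        refine lintegral_congr fun y => setLIntegral_congr_fun measurableSet_Ioi fun t _ => ?_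
        simp only [indicator_apply, mem_ofPred_eq]
        split_ifs <;> simp [mul_comm]
    _ = _ := by
        simp_rw [lintegral_Ioi_indicator_two_mul_rpow_mul hq]
        have hne : (ENNReal.ofReal (q - 1))⁻¹ * 2 ^ (q - 1) ≠ ∞ :=
          ENNReal.mul_ne_top (ENNReal.inv_ne_top.2 (ENNReal.ofReal_pos.2 (by linarith)).ne')
            (ENNReal.rpow_ne_top_of_nonneg (by linarith) ofNat_ne_top)
        rw [lintegral_const_mul' _ _ hne, ENNReal.ofReal_div_of_pos (by linarith),
          ENNReal.div_eq_inv_mul]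
        ring

end LayerCake

theorem le_rpow_mul_rpow_mul_rpow {u v : ℝ≥0∞} {P : ℝ} (hP : 1 < P) (hv : v ≠ ∞)
    (huv : u ^ P * v ^ (1 - P) ≠ ∞) : u ≤ (u ^ P * v ^ (1 - P)) ^ P⁻¹ * v ^ (1 - P⁻¹) := by
  rcases eq_or_ne v 0 with rfl | hv0
  · -- `0 ^ (1 - P) = ∞`, so finiteness forces `u = 0`.
    have hu : u = 0 := by
      by_contra hu
      rw [ENNReal.zero_rpow_of_neg (by linarith), ENNReal.mul_top] at huv
      · exact huv rfl
      · exact (ENNReal.rpow_pos_of_nonneg (pos_iff_ne_zero.2 hu) (by linarith)).ne'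
    simp [hu]
  refine le_of_eq ?_
  rw [ENNReal.mul_rpow_of_nonneg _ _ (by positivity), ← ENNReal.rpow_mul, ← ENNReal.rpow_mul,
    mul_inv_cancel₀ (by positivity), ENNReal.rpow_one, mul_assoc, ← ENNReal.rpow_add _ _ hv0 hv,
    show (1 - P) * P⁻¹ + (1 - P⁻¹) = 0 by field_simp; ring, ENNReal.rpow_zero, mul_one]

theorem rpow_mul_rpow_neg_le_rpow_of_le {m m₁ m₂ : ℝ≥0∞} {a b P : ℝ} (hP : 0 ≤ P)
    (h : m ≤ m₁ ^ a * m₂ ^ b) : m ^ P * m₂ ^ (-(b * P)) ≤ m₁ ^ (a * P) :=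
  calc m ^ P * m₂ ^ (-(b * P)) ≤ (m₁ ^ a * m₂ ^ b) ^ P * m₂ ^ (-(b * P)) := by gcongr
    _ = m₁ ^ (a * P) * (m₂ ^ (b * P) * (m₂ ^ (b * P))⁻¹) := by
      rw [ENNReal.mul_rpow_of_nonneg _ _ hP, ← ENNReal.rpow_mul, ← ENNReal.rpow_mul,
        ENNReal.rpow_neg, mul_assoc]
    _ ≤ m₁ ^ (a * P) := mul_le_of_le_one_right' (ENNReal.mul_inv_le_one _)

theorem mul_two_rpow_mul_div_rpow_le {C t p q : ℝ} (hC : 1 ≤ C) (ht : 1 < t) (hp : 1 < p)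
    (hq : q = p / (p - 1) - (p / (p - 1) - 1) / t) :
    (C * 2 ^ q * (q / (q - 1))) ^ ((p - 1) / p) ≤ 2 * C * p * (t / (t - 1)) ^ ((p - 1) / p) := by
  have hp1 : 0 < p - 1 := by linarith
  have ht1 : 0 < t - 1 := by linarith
  set r := (p - 1) / p with hr
  have hr0 : 0 < r := by positivity
  have hr1 : r ≤ 1 := (div_le_one (by linarith)).2 (by linarith)
  have hq' : q = (t * p - 1) / (t * (p - 1)) := by rw [hq]; field_simp; ring
  have hqq : q / (q - 1) = (t * p - 1) / (t - 1) := by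
    rw [hq', div_sub_one (by positivity), div_div_div_cancel_right₀ (by positivity)]
    ring_nf
  have hqr : q * r ≤ 1 := by
    rw [hq', hr, div_mul_div_comm, div_le_one (by positivity)]
    nlinarith
  have hC' : C ^ r ≤ C := by
    simpa using Real.rpow_le_rpow_of_exponent_le hC hr1
  have h2 : ((2 : ℝ) ^ q) ^ r ≤ 2 := by
    rw [← Real.rpow_mul zero_le_two]
    simpa using Real.rpow_le_rpow_of_exponent_le one_le_two hqr
  have hq0 : 0 < q / (q - 1) := by rw [hqq]; exact div_pos (by nlinarith) ht1
  have hpt : (q / (q - 1)) ^ r ≤ p * (t / (t - 1)) ^ r := by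
    calc (q / (q - 1)) ^ r ≤ (p * (t / (t - 1))) ^ r := by
          rw [hqq]
          gcongr
          · exact hqq ▸ hq0.le
          · rw [mul_div_assoc']
            gcongr
            linarith
      _ = p ^ r * (t / (t - 1)) ^ r := Real.mul_rpow (by linarith) (by positivity)
      _ ≤ p * (t / (t - 1)) ^ r := by
          gcongr
          simpa using Real.rpow_le_rpow_of_exponent_le hp.le hr1
  calc (C * 2 ^ q * (q / (q - 1))) ^ r = C ^ r * ((2 : ℝ) ^ q) ^ r * (q / (q - 1)) ^ r := by
        rw [Real.mul_rpow (by positivity) hq0.le, Real.mul_rpow (by positivity) (by positivity)]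
    _ ≤ C * 2 * (p * (t / (t - 1)) ^ r) := by gcongr
    _ = 2 * C * p * (t / (t - 1)) ^ r := by ring

namespace Rough

variable {d : ℕ}

namespace Cube

theorem carrier_eq_preimage_pi (Q : Cube d) :
    Q.carrier = (MeasurableEquiv.toLp 2 (Fin d → ℝ)).symm ⁻¹'
      univ.pi fun i => Icc (Q.center i - Q.halfside) (Q.center i + Q.halfside) := by
  ext x
  have hsymm : ∀ i, (MeasurableEquiv.toLp 2 (Fin d → ℝ)).symm x i = x i := fun _ => rfl
  simp only [Cube.carrier, mem_ofPred_eq, mem_preimage, mem_univ_pi, mem_Icc, abs_sub_le_iff, hsymm]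
  exact forall_congr' fun i => by constructor <;> intro h <;> constructor <;> linarith [h.1, h.2]

theorem measurableSet_carrier (Q : Cube d) : MeasurableSet Q.carrier := by
  rw [carrier_eq_preimage_pi]
  exact (MeasurableSet.univ_pi fun _ => measurableSet_Icc).preimage (MeasurableEquiv.measurable _)

theorem volume_carrier (Q : Cube d) :
    volume Q.carrier = ENNReal.ofReal (2 * Q.halfside) ^ d := by
  rw [carrier_eq_preimage_pi, (EuclideanSpace.volume_preserving_symm_measurableEquiv_toLp
    (Fin d)).measure_preimage (MeasurableSet.univ_pi fun _ => measurableSet_Icc).nullMeasurableSet,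
    volume_pi_pi]
  simp only [Real.volume_Icc, add_sub_sub_cancel, ← two_mul, Finset.prod_const, Finset.card_univ,
    Fintype.card_fin]

theorem volume_pos (Q : Cube d) : 0 < volume Q.carrier := by
  rw [volume_carrier]
  exact ENNReal.pow_pos (ENNReal.ofReal_pos.2 (by linarith [Q.halfside_pos])) _

theorem volume_ne_top (Q : Cube d) : volume Q.carrier ≠ ∞ := by
  rw [volume_carrier]
  exact pow_ne_top ofReal_ne_top

theorem volume_dilate (Q : Cube d) {t : ℝ} (ht : 0 < t) :
    volume (Q.dilate t ht).carrier = ENNReal.ofReal t ^ d * volume Q.carrier := by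
  rw [volume_carrier, volume_carrier, ← mul_pow, ← ENNReal.ofReal_mul ht.le]
  simp only [Cube.dilate, mul_left_comm]

theorem center_mem (Q : Cube d) : Q.center ∈ Q.carrier := fun i => by
  simp [Q.halfside_pos.le]

theorem carrier_subset_dilate (Q : Cube d) {t : ℝ} (ht : 1 ≤ t) :
    Q.carrier ⊆ (Q.dilate t (by linarith)).carrier := fun _ hx i =>
  (hx i).trans (le_mul_of_one_le_left Q.halfside_pos.le ht)

theorem ball_subset_dilate (Q : Cube d) {x : Ed d} (hx : x ∈ Q.carrier) {t : ℝ} (ht : 0 < t) :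
    Metric.ball x ((t - 1) * Q.halfside) ⊆ (Q.dilate t ht).carrier := by
  intro y hy i
  have hyx : |y i - x i| < (t - 1) * Q.halfside :=
    (PiLp.dist_apply_le y x i).trans_lt (Metric.mem_ball.1 hy)
  calc |y i - Q.center i| ≤ |y i - x i| + |x i - Q.center i| := abs_sub_le _ _ _
    _ ≤ t * Q.halfside := by linarith [hx i]

theorem carrier_subset_dilate_of_inter_nonempty {Q Q' : Cube d} {τ t : ℝ} (ht : 0 < t)
    (hτt : 1 + 2 * τ ≤ t) (hQQ' : (Q.carrier ∩ Q'.carrier).Nonempty)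
    (hside : Q.halfside ≤ τ * Q'.halfside) : Q.carrier ⊆ (Q'.dilate t ht).carrier := by
  obtain ⟨z, hzQ, hzQ'⟩ := hQQ'
  intro y hy i
  calc |y i - Q'.center i|
      ≤ |y i - Q.center i| + |z i - Q.center i| + |z i - Q'.center i| := by
        linarith [abs_sub_le (y i) (Q.center i) (Q'.center i),
          abs_sub_le (Q.center i) (z i) (Q'.center i), abs_sub_comm (Q.center i) (z i)]
    _ ≤ (1 + 2 * τ) * Q'.halfside := by linarith [hy i, hzQ i, hzQ' i]
    _ ≤ t * Q'.halfside := mul_le_mul_of_nonneg_right hτt Q'.halfside_pos.le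

end Cube

theorem lavg_mul_volume (Q : Cube d) (f : Ed d → ℝ≥0∞) :
    lavg Q f * volume Q.carrier = ∫⁻ x in Q.carrier, f x := by
  rw [lavg, mul_comm, ← mul_assoc, ENNReal.mul_inv_cancel Q.volume_pos.ne' Q.volume_ne_top, one_mul]

theorem lavg_add_const (Q : Cube d) (f : Ed d → ℝ≥0∞) (a : ℝ≥0∞) :
    lavg Q (fun x => f x + a) = lavg Q f + a := by
  rw [lavg, lavg, lintegral_add_right _ measurable_const, setLIntegral_const, mul_add, mul_comm a,
    ← mul_assoc, ENNReal.inv_mul_cancel Q.volume_pos.ne' Q.volume_ne_top, one_mul]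

theorem inv_pow_mul_lavg_le_lavg_dilate (Q : Cube d) {t : ℝ} (ht : 1 ≤ t) (f : Ed d → ℝ≥0∞) :
    (ENNReal.ofReal t ^ d)⁻¹ * lavg Q f ≤ lavg (Q.dilate t (by linarith)) f := by
  rw [lavg, lavg, Q.volume_dilate, ENNReal.mul_inv (Or.inr Q.volume_ne_top)
    (Or.inr Q.volume_pos.ne'), mul_assoc]
  gcongr
  exact Q.carrier_subset_dilate ht

theorem lavg_le_maximal {f : Ed d → ℝ≥0∞} {x : Ed d} {Q : Cube d} (hx : x ∈ Q.carrier) :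
    lavg Q f ≤ maximal f x :=
  le_iSup₂ (f := fun (Q : Cube d) (_ : x ∈ Q.carrier) => lavg Q f) Q hx

theorem exists_ball_subset_lt_lavg_of_lt_maximal {h : Ed d → ℝ≥0∞} {x : Ed d} {l : ℝ≥0∞}
    (hl : l < maximal h x) :
    ∃ (Q : Cube d) (ε : ℝ), 0 < ε ∧ Metric.ball x ε ⊆ Q.carrier ∧ l < lavg Q h := by
  obtain ⟨Q, hxQ, hlQ⟩ : ∃ Q : Cube d, x ∈ Q.carrier ∧ l < lavg Q h := by
    simpa only [maximal, lt_iSup_iff, exists_prop] using hl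
  -- Slightly enlarged cubes still have average above `l` and contain a neighbourhood of `x`.
  have hlim : Tendsto (fun t : ℝ => (ENNReal.ofReal t ^ d)⁻¹ * lavg Q h) (𝓝[>] 1)
      (𝓝 (lavg Q h)) := by
    have hcont : Continuous fun t : ℝ => (ENNReal.ofReal t ^ d)⁻¹ :=
      continuous_inv.comp ((ENNReal.continuous_pow d).comp ENNReal.continuous_ofReal)
    simpa using (ENNReal.Tendsto.mul_const (hcont.tendsto 1) (by simp)).mono_left
      nhdsWithin_le_nhds
  obtain ⟨t, hlt, ht⟩ :=
    ((hlim.eventually_const_lt hlQ).and self_mem_nhdsWithin).exists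
  refine ⟨Q.dilate t (by linarith [show (1:ℝ) < t from ht]), (t - 1) * Q.halfside,
    mul_pos (by linarith [show (1:ℝ) < t from ht]) Q.halfside_pos, Q.ball_subset_dilate hxQ _, ?_⟩
  exact hlt.trans_le (inv_pow_mul_lavg_le_lavg_dilate Q ht.le h)

theorem lowerSemicontinuous_maximal (h : Ed d → ℝ≥0∞) : LowerSemicontinuous (maximal h) := by
  intro x l hl
  obtain ⟨Q, ε, hε, hball, hlQ⟩ := exists_ball_subset_lt_lavg_of_lt_maximal hl
  filter_upwards [Metric.ball_mem_nhds x hε] with y hy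
  exact hlQ.trans_le (lavg_le_maximal (hball hy))

theorem measurable_maximal (h : Ed d → ℝ≥0∞) : Measurable (maximal h) :=
  (lowerSemicontinuous_maximal h).measurable

theorem mul_volume_biUnion_le_lintegral {S : Finset (Cube d)} {h : Ed d → ℝ≥0∞} {l : ℝ≥0∞}
    (hS : ∀ Q ∈ S, l < lavg Q h) :
    l * volume (⋃ Q ∈ S, Q.carrier) ≤ 5 ^ d * ∫⁻ x, h x := by
  obtain ⟨R, hR⟩ := (S.finite_toSet.image Cube.halfside).bddAbove
  -- Vitali with `τ = 2` enlarges the selected cubes by the factor `1 + 2τ = 5`.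
  obtain ⟨u, huS, hudisj, hucover⟩ := Vitali.exists_disjoint_subfamily_covering_enlargement
    Cube.carrier (S : Set (Cube d)) Cube.halfside 2 one_lt_two (fun Q _ => Q.halfside_pos.le) R
    (fun Q hQ => hR (mem_image_of_mem _ hQ)) (fun Q _ => ⟨Q.center, Q.center_mem⟩)
  have hu : u.Finite := S.finite_toSet.subset huS
  have hcover : ⋃ Q ∈ S, Q.carrier ⊆ ⋃ Q ∈ hu.toFinset, (Q.dilate 5 (by norm_num)).carrier := by
    refine iUnion₂_subset fun Q hQ => ?_
    obtain ⟨Q', hQ'u, hint, hside⟩ := hucover Q hQ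
    refine (Cube.carrier_subset_dilate_of_inter_nonempty (τ := 2) (t := 5) (by norm_num)
      (by norm_num) hint hside).trans ?_
    exact subset_biUnion_of_mem (u := fun Q : Cube d => (Q.dilate 5 _).carrier)
      (hu.mem_toFinset.2 hQ'u)
  calc l * volume (⋃ Q ∈ S, Q.carrier)
      ≤ l * ∑ Q ∈ hu.toFinset, volume (Q.dilate 5 (by norm_num)).carrier := by
        gcongr
        exact (measure_mono hcover).trans (measure_biUnion_finset_le _ _)
    _ = 5 ^ d * ∑ Q ∈ hu.toFinset, l * volume Q.carrier := by
        simp only [Cube.volume_dilate, Finset.mul_sum, ENNReal.ofReal_ofNat]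
        exact Finset.sum_congr rfl fun _ _ => by ring
    _ ≤ 5 ^ d * ∑ Q ∈ hu.toFinset, ∫⁻ x in Q.carrier, h x := by
        gcongr with Q hQ
        rw [← lavg_mul_volume]
        exact mul_le_mul_left (hS Q (huS (hu.mem_toFinset.1 hQ))).le _
    _ = 5 ^ d * ∫⁻ x in ⋃ Q ∈ hu.toFinset, Q.carrier, h x := by
        rw [lintegral_biUnion_finset (by rwa [hu.coe_toFinset])
          (fun Q _ => Q.measurableSet_carrier)]
    _ ≤ 5 ^ d * ∫⁻ x, h x := mul_le_mul_right (setLIntegral_le_lintegral _ _) _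

theorem mul_volume_lt_maximal_le (h : Ed d → ℝ≥0∞) (l : ℝ≥0∞) :
    l * volume {x | l < maximal h x} ≤ 5 ^ d * ∫⁻ x, h x := by
  classical
  have hO : IsOpen {x | l < maximal h x} := (lowerSemicontinuous_maximal h).isOpen_preimage l
  rw [hO.measure_eq_iSup_isCompact]
  simp only [ENNReal.mul_iSup]
  refine iSup₂_le fun K hKO => iSup_le fun hK => ?_
  choose Q ε hε hball hlQ using fun x (hx : x ∈ K) =>
    exists_ball_subset_lt_lavg_of_lt_maximal (hKO hx)
  obtain ⟨F, hKF⟩ := hK.elim_nhds_subcover' (fun x hx => Metric.ball x (ε x hx))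
    fun x hx => Metric.ball_mem_nhds x (hε x hx)
  have hKS : K ⊆ ⋃ Q' ∈ F.image fun x : K => Q x x.2, Q'.carrier := by
    rw [Finset.set_biUnion_finset_image]
    exact hKF.trans (biUnion_mono subset_rfl fun x _ => hball x x.2)
  refine (mul_le_mul_right (measure_mono hKS) l).trans (mul_volume_biUnion_le_lintegral ?_)
  simp only [Finset.mem_image]
  rintro _ ⟨x, -, rfl⟩
  exact hlQ x x.2

theorem maximal_le_maximal_indicator_add (h : Ed d → ℝ≥0∞) (a : ℝ≥0∞) (x : Ed d) :
    maximal h x ≤ maximal ({y | a < h y}.indicator h) x + a := by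
  refine iSup₂_le fun Q hQ => ?_
  calc lavg Q h ≤ lavg Q (fun y => {y | a < h y}.indicator h y + a) := by
        unfold lavg
        gcongr with y
        by_cases hy : a < h y
        · simp [hy]
        · simpa [indicator_apply, hy] using not_lt.1 hy
    _ = lavg Q ({y | a < h y}.indicator h) + a := lavg_add_const _ _ _
    _ ≤ maximal ({y | a < h y}.indicator h) x + a := by
        gcongr
        exact lavg_le_maximal hQ

theorem mul_volume_lt_maximal_le_indicator (h : Ed d → ℝ≥0∞) (a : ℝ≥0∞) :
    a * volume {x | a < maximal h x} ≤
      2 * 5 ^ d * ∫⁻ x, {y | a < 2 * h y}.indicator h x := by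
  have hsub : {x | a < maximal h x} ⊆ {x | a / 2 < maximal ({y | a / 2 < h y}.indicator h) x} := by
    intro x hx
    by_contra hle
    have := (maximal_le_maximal_indicator_add h (a / 2) x).trans
      (add_le_add_left (not_lt.1 hle) _)
    rw [ENNReal.add_halves] at this
    exact not_lt.2 this hx
  have hset : {y | a / 2 < h y} = {y | a < 2 * h y} := by
    ext y
    simp [ENNReal.div_lt_iff, mul_comm]
  calc a * volume {x | a < maximal h x}
      = 2 * (a / 2 * volume {x | a < maximal h x}) := by
        rw [← mul_assoc, ENNReal.mul_div_cancel two_ne_zero ofNat_ne_top]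
    _ ≤ 2 * (5 ^ d * ∫⁻ x, {y | a / 2 < h y}.indicator h x) :=
        mul_le_mul_right ((mul_le_mul_right (measure_mono hsub) _).trans
          (mul_volume_lt_maximal_le _ _)) 2
    _ = 2 * 5 ^ d * ∫⁻ x, {y | a < 2 * h y}.indicator h x := by
        rw [hset, mul_assoc]

theorem lintegral_maximal_rpow_le {h : Ed d → ℝ≥0∞} (hh : Measurable h) {q : ℝ} (hq : 1 < q) :
    ∫⁻ x, maximal h x ^ q ≤ ENNReal.ofReal (5 ^ d * 2 ^ q * (q / (q - 1))) * ∫⁻ x, h x ^ q := by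
  have hconst : ENNReal.ofReal (q / (q - 1)) * 2 ^ (q - 1) * (2 * 5 ^ d) =
      ENNReal.ofReal (5 ^ d * 2 ^ q * (q / (q - 1))) := by
    rw [ENNReal.ofReal_mul (by positivity), ENNReal.ofReal_mul (by positivity),
      ← ENNReal.ofReal_rpow_of_pos two_pos, ENNReal.ofReal_pow (by norm_num), ← mul_assoc,
      ENNReal.rpow_sub _ _ two_ne_zero ofNat_ne_top]
    simp only [ENNReal.ofReal_ofNat, ENNReal.rpow_one]
    rw [mul_assoc (ENNReal.ofReal _), ENNReal.div_mul_cancel two_ne_zero ofNat_ne_top]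
    ring
  exact hconst ▸ lintegral_rpow_le_of_mul_meas_lt_le (measurable_maximal h) hh hq
    (mul_volume_lt_maximal_le_indicator h)

theorem lavg_eq_lintegral_smul (Q : Cube d) (f : Ed d → ℝ≥0∞) :
    lavg Q f = ∫⁻ x, f x ∂((volume Q.carrier)⁻¹ • volume.restrict Q.carrier) := by
  rw [lintegral_smul_measure, smul_eq_mul, lavg]

theorem lavg_le_lavg_rpow_mul_lavg_rpow (Q : Cube d) {F G W : Ed d → ℝ≥0∞} {a b : ℝ}
    (ha : 0 ≤ a) (hb : 0 ≤ b) (hab : a + b = 1) (hG : Measurable G) (hW : Measurable W)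
    (hF : ∀ᵐ y, F y ≤ G y ^ a * W y ^ b) :
    lavg Q F ≤ lavg Q G ^ a * lavg Q W ^ b := by
  simp only [lavg_eq_lintegral_smul]
  exact (lintegral_mono_ae (Measure.ae_smul_measure (ae_restrict_of_ae hF) _)).trans
    (ENNReal.lintegral_mul_norm_pow_le hG.aemeasurable hW.aemeasurable ha hb hab)

theorem maximal_le_maximal_rpow_mul_maximal_rpow {F G W : Ed d → ℝ≥0∞} {a b : ℝ}
    (ha : 0 ≤ a) (hb : 0 ≤ b) (hab : a + b = 1) (hG : Measurable G) (hW : Measurable W)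
    (hF : ∀ᵐ y, F y ≤ G y ^ a * W y ^ b) (x : Ed d) :
    maximal F x ≤ maximal G x ^ a * maximal W x ^ b :=
  iSup₂_le fun Q hQ => (lavg_le_lavg_rpow_mul_lavg_rpow Q ha hb hab hG hW hF).trans
    (by gcongr <;> exact lavg_le_maximal hQ)

theorem rpow_maximal_mul_rpow_maximal_le {u v : Ed d → ℝ≥0∞} (hu : Measurable u)
    (hv : Measurable v) (hv_top : ∀ y, v y ≠ ∞) {t P q : ℝ} (ht : 1 < t) (hP : 1 < P)
    (hq : q = P - (P - 1) / t) (hfin : ∀ᵐ y, u y ^ P * v y ^ (1 - P) ≠ ∞) (x : Ed d) :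
    maximal u x ^ P * (maximal (fun y => v y ^ t) x ^ (1 / t)) ^ (1 - P) ≤
      maximal (fun y => (u y ^ P * v y ^ (1 - P)) ^ q⁻¹) x ^ q := by
  have hq0 : 0 < q := by rw [hq]; linarith [div_lt_self (by linarith : 0 < P - 1) ht]
  have hqP : q / P ≤ 1 := (div_le_one (by linarith)).2 <| by
    rw [hq]; linarith [div_pos (by linarith : 0 < P - 1) (by linarith : 0 < t)]
  have hM : maximal u x ≤ maximal (fun y => (u y ^ P * v y ^ (1 - P)) ^ q⁻¹) x ^ (q / P) *
      maximal (fun y => v y ^ t) x ^ (1 - q / P) := by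
    refine maximal_le_maximal_rpow_mul_maximal_rpow (by positivity) (by linarith) (by ring)
      (by fun_prop) (by fun_prop) ?_ x
    filter_upwards [hfin] with y hy
    refine (le_rpow_mul_rpow_mul_rpow hP (hv_top y) hy).trans_eq ?_
    rw [← ENNReal.rpow_mul, ← ENNReal.rpow_mul]
    congr 2
    · field_simp
    · rw [hq]; field_simp; ring
  convert rpow_mul_rpow_neg_le_rpow_of_le (by linarith : (0 : ℝ) ≤ P) hM using 2
  · rw [← ENNReal.rpow_mul]
    congr 1
    rw [hq]; field_simp; ring
  · field_simp

theorem lintegral_rpow_maximal_mul_rpow_maximal_le {u v : Ed d → ℝ≥0∞} (hu : Measurable u)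
    (hv : Measurable v) (hv_top : ∀ y, v y ≠ ∞) {t P q : ℝ} (ht : 1 < t) (hP : 1 < P)
    (hq : q = P - (P - 1) / t) :
    ∫⁻ x, maximal u x ^ P * (maximal (fun y => v y ^ t) x ^ (1 / t)) ^ (1 - P) ≤
      ENNReal.ofReal (5 ^ d * 2 ^ q * (q / (q - 1))) * ∫⁻ x, u x ^ P * v x ^ (1 - P) := by
  have hq1 : 1 < q := by rw [hq]; linarith [div_lt_self (by linarith : 0 < P - 1) ht]
  rcases eq_or_ne (∫⁻ x, u x ^ P * v x ^ (1 - P)) ∞ with htop | htop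
  · have hK : 0 < 5 ^ d * 2 ^ q * (q / (q - 1)) := by
      have := sub_pos.2 hq1
      positivity
    rw [htop, ENNReal.mul_top (ENNReal.ofReal_pos.2 hK).ne']
    exact le_top
  calc _ ≤ ∫⁻ x, maximal (fun y => (u y ^ P * v y ^ (1 - P)) ^ q⁻¹) x ^ q :=
        lintegral_mono (rpow_maximal_mul_rpow_maximal_le hu hv hv_top ht hP hq
          ((ae_lt_top (by fun_prop) htop).mono fun _ => ne_of_lt))
    _ ≤ _ := lintegral_maximal_rpow_le (by fun_prop) hq1
    _ = _ := by
        simp_rw [← ENNReal.rpow_mul, inv_mul_cancel₀ (by positivity : q ≠ 0), ENNReal.rpow_one]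

end Rough

open MeasureTheory ENNReal Rough in
theorem stmt14 (d : ℕ) :
    ∃ c : ℝ, 0 < c ∧
      ∀ t p : ℝ, 1 < t → 1 < p →
        ∀ w : Ed d → ℝ, Measurable w → (∀ x, 0 ≤ w x) →
        ∀ f : Ed d → ℝ, Measurable f →
          (∫⁻ x, Mabs f x ^ (p / (p - 1)) *
              ((maximal (fun y => ENNReal.ofReal (w y ^ t)) x) ^ (1 / t))
                ^ (1 - p / (p - 1))) ^ ((p - 1) / p) ≤
            ENNReal.ofReal (c * p * (t / (t - 1)) ^ ((p - 1) / p)) *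
              (∫⁻ x, ENNReal.ofReal |f x| ^ (p / (p - 1)) *
                ENNReal.ofReal (w x) ^ (1 - p / (p - 1))) ^ ((p - 1) / p) := by
  refine ⟨2 * 5 ^ d, by positivity, fun t p ht hp w hw hw0 f hf => ?_⟩
  set P := p / (p - 1)
  set q := P - (P - 1) / t with hq
  have hP1 : 1 < P := (one_lt_div (by linarith)).2 (by linarith)
  have hr0 : 0 < (p - 1) / p := div_pos (by linarith) (by linarith)
  have hq1 : 0 < q - 1 := by linarith [div_lt_self (by linarith : 0 < P - 1) ht]
  have hW : (fun y => ENNReal.ofReal (w y ^ t)) = fun y => ENNReal.ofReal (w y) ^ t :=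
    funext fun y => (ENNReal.ofReal_rpow_of_nonneg (hw0 y) (by linarith)).symm
  calc _ ≤ (ENNReal.ofReal (5 ^ d * 2 ^ q * (q / (q - 1))) *
        ∫⁻ x, ENNReal.ofReal |f x| ^ P * ENNReal.ofReal (w x) ^ (1 - P)) ^ ((p - 1) / p) := by
        rw [hW]
        exact ENNReal.rpow_le_rpow (lintegral_rpow_maximal_mul_rpow_maximal_le (by fun_prop)
          (by fun_prop) (fun _ => ofReal_ne_top) ht hP1 hq) hr0.le
    _ = ENNReal.ofReal ((5 ^ d * 2 ^ q * (q / (q - 1))) ^ ((p - 1) / p)) *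
        (∫⁻ x, ENNReal.ofReal |f x| ^ P * ENNReal.ofReal (w x) ^ (1 - P)) ^ ((p - 1) / p) := by
        rw [ENNReal.mul_rpow_of_nonneg _ _ hr0.le,
          ENNReal.ofReal_rpow_of_nonneg
            (mul_nonneg (by positivity) (div_nonneg (by linarith) hq1.le)) hr0.le]
    _ ≤ _ := by
        gcongr
        exact mul_two_rpow_mul_div_rpow_le (one_le_pow₀ (by norm_num)) ht hp hq
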